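/- A function O : {0,1}^6 → {-1,1} is the output of some three-module one-bit classical sequential processor if and only if the 4×16 matrix A1 defined by A1[(X1,X2)][(X3,X4,X5,X6)] = O(X1,...,X6) has at most 2 distinct rows and the 16×4 matrix A2 defined by A2[(X1,X2,X3,X4)][(X5,X6)] = O(X1,...,X6) has at most 2 distinct rows. -/

import Mathlib

/-!
The rows of the 4×16 reshaping of a processor's output depend on `(X1, X2)` only through the
bit `f1 (X1, X2)`, and those of the 16×4 reshaping depend on `(X1, …, X4)` only through
`f2 (f1 (X1, X2)) (X3, X4)`, so each has at most two distinct rows. Conversely, choose a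
representative row index for each distinct row: `f1` records which representative the row of
`(X1, X2)` equals, `f2` does the same for the 16×4 matrix with `(X1, X2)` replaced by its
representative, and `f3` reads `O` off at the representative of `(X1, …, X4)`.
-/

/-- Domain of six input bits. -/
abbrev Bits6 := Fin 2 × Fin 2 × Fin 2 × Fin 2 × Fin 2 × Fin 2

/-- Output of a three-module one-bit classical sequential processor given by the
module strategies `f1`, `f2`, `f3`. -/
def output3bit (f1 : Fin 2 × Fin 2 → Fin 2) (f2 : Fin 2 → Fin 2 × Fin 2 → Fin 2)
    (f3 : Fin 2 → Fin 2 × Fin 2 → ℤ) : Bits6 → ℤ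
  | (x1, x2, x3, x4, x5, x6) => f3 (f2 (f1 (x1, x2)) (x3, x4)) (x5, x6)

open Set Function

theorem ncard_range_comp_le {α β : Type*} {n : ℕ} (g : Fin n → β) (c : α → Fin n) :
    (range fun a => g (c a)).ncard ≤ n :=
  calc (range fun a => g (c a)).ncard ≤ (range g).ncard :=
        ncard_le_ncard (range_comp_subset_range c g) (finite_range g)
    _ ≤ n := by simpa [← Nat.card_coe_set_eq] using Finite.card_range_le g

theorem exists_fin_representatives_of_ncard_range_le {α β : Type*} [Nonempty α] {n : ℕ}
    {S : α → β} (hS : (range S).Finite) (h : (range S).ncard ≤ n) :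
    ∃ (c : α → Fin n) (r : Fin n → α), ∀ a, S a = S (r (c a)) := by
  have : Finite (range S) := hS
  let ι : range S ↪ Fin n :=
    (Finite.equivFin (range S)).toEmbedding.trans
      (Fin.castLEEmb (by rwa [Nat.card_coe_set_eq]))
  refine ⟨ι ∘ rangeFactorization S, rangeSplitting S ∘ invFun ι, fun a => ?_⟩
  simp [apply_rangeSplitting, leftInverse_invFun ι.injective _]

/-- existence criterion, one-bit case: a ±1-valued function `O` on six bits
is the output of some three-module one-bit classical sequential processor iff both the
4×16 reshaping and the 16×4 reshaping of `O` have at most 2 distinct rows. -/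
theorem stmt2 (O : Bits6 → ℤ) (hO : ∀ x, O x = -1 ∨ O x = 1) :
    (∃ (f1 : Fin 2 × Fin 2 → Fin 2) (f2 : Fin 2 → Fin 2 × Fin 2 → Fin 2)
        (f3 : Fin 2 → Fin 2 × Fin 2 → ℤ),
      (∀ s p, f3 s p = -1 ∨ f3 s p = 1) ∧ O = output3bit f1 f2 f3) ↔
    ((Set.range (fun p : Fin 2 × Fin 2 =>
        fun q : Fin 2 × Fin 2 × Fin 2 × Fin 2 =>
          O (p.1, p.2, q.1, q.2.1, q.2.2.1, q.2.2.2))).ncard ≤ 2 ∧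
     (Set.range (fun p : Fin 2 × Fin 2 × Fin 2 × Fin 2 =>
        fun q : Fin 2 × Fin 2 =>
          O (p.1, p.2.1, p.2.2.1, p.2.2.2, q.1, q.2))).ncard ≤ 2) := by
  constructor
  · rintro ⟨f1, f2, f3, -, rfl⟩
    exact ⟨ncard_range_comp_le
        (fun s (q : Fin 2 × Fin 2 × Fin 2 × Fin 2) => f3 (f2 s (q.1, q.2.1)) q.2.2) f1,
      ncard_range_comp_le f3 fun p : Fin 2 × Fin 2 × Fin 2 × Fin 2 => f2 (f1 (p.1, p.2.1)) p.2.2⟩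
  · rintro ⟨h1, h2⟩
    obtain ⟨c1, r1, hr1⟩ := exists_fin_representatives_of_ncard_range_le (finite_range _) h1
    obtain ⟨c2, r2, hr2⟩ := exists_fin_representatives_of_ncard_range_le (finite_range _) h2
    refine ⟨c1, fun s p => c2 ((r1 s).1, (r1 s).2, p.1, p.2),
      fun t p => O ((r2 t).1, (r2 t).2.1, (r2 t).2.2.1, (r2 t).2.2.2, p.1, p.2),
      fun _ _ => hO _, ?_⟩
    funext ⟨x1, x2, x3, x4, x5, x6⟩
    set y := r1 (c1 (x1, x2))
    set z := r2 (c2 (y.1, y.2, x3, x4))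
    calc O (x1, x2, x3, x4, x5, x6) = O (y.1, y.2, x3, x4, x5, x6) :=
          congrFun (hr1 (x1, x2)) (x3, x4, x5, x6)
      _ = O (z.1, z.2.1, z.2.2.1, z.2.2.2, x5, x6) :=
          congrFun (hr2 (y.1, y.2, x3, x4)) (x5, x6)
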